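/- Let φ denote the standard Gaussian density, Φ the standard Gaussian CDF, and adopt the convention φ^{(-1)} := Φ. For every real X, every s > 0, every σ > 0, and every natural number l, ∫_0^∞ (1/σ)φ(θ/σ) · (1/s)·(1/√(l!))·φ^{(l)}((X − θ)/s) dθ = ( s^l / (√(l!) · (s² + σ²)^{(l+1)/2}) ) · Σ_{m=0}^{l} C(l,m) · (σ/s)^m · φ^{(m−1)}( (X/√(s² + σ²)) · (σ/s) ) · φ^{(l−m)}( X/√(s² + σ²) ), where C(l,m) is the binomial coefficient. -/

import Mathlib

/-!
Put `c = √(s² + σ²)`. Since `φ^{(l)}` is bounded, one may differentiate under the integral sign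
in `X`, so `∫₀^∞ φ(θ/σ) φ^{(l)}((X - θ)/s) dθ` is `s^l` times the `l`-th derivative of the
case `l = 0`. That case is computed by completing the square,
`φ(θ/σ) φ((X - θ)/s) = φ(X/c) φ((θ - Xσ²/c²)/(sσ/c))`, which gives `(sσ/c) Φ(σX/(sc)) φ(X/c)`;
the Leibniz rule applied to this product of two dilated functions produces the binomial sum.
-/

open MeasureTheory Real

/-- The standard Gaussian density `φ`. -/
noncomputable def phi (x : ℝ) : ℝ := (Real.sqrt (2 * Real.pi))⁻¹ * Real.exp (-x ^ 2 / 2)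

/-- The `l`-th derivative `φ^{(l)}` of the standard Gaussian density (`φ^{(0)} = φ`). -/
noncomputable def phiD (l : ℕ) : ℝ → ℝ := iteratedDeriv l phi

/-- The standard Gaussian CDF `Φ`. -/
noncomputable def PhiCDF (x : ℝ) : ℝ := ∫ t in Set.Iic x, phi t

/-- `φ^{(m−1)}` with the convention `φ^{(-1)} := Φ` (so `m = 0` gives `Φ`). -/
noncomputable def phiDm1 (m : ℕ) : ℝ → ℝ := if m = 0 then PhiCDF else phiD (m - 1)

open Filter Topology Set
open scoped ContDiff

lemma phi_eq_mul_exp (x : ℝ) : phi x = (√(2 * π))⁻¹ * exp (-(x ^ 2 / 2)) := by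
  rw [phi, neg_div]

lemma phi_neg (x : ℝ) : phi (-x) = phi x := by
  simp [phi]

lemma contDiff_phi : ContDiff ℝ ∞ phi := by
  unfold phi; fun_prop

lemma continuous_phi : Continuous phi := contDiff_phi.continuous

lemma iteratedDeriv_phi (l : ℕ) : iteratedDeriv l phi = phiD l := rfl

lemma phiD_zero : phiD 0 = phi := iteratedDeriv_zero

lemma contDiff_phiD (l : ℕ) : ContDiff ℝ ∞ (phiD l) := by
  rw [phiD, iteratedDeriv_eq_iterate]
  exact contDiff_phi.iterate_deriv l

@[fun_prop]
lemma continuous_phiD (l : ℕ) : Continuous (phiD l) := (contDiff_phiD l).continuous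

lemma hasDerivAt_phiD (l : ℕ) (x : ℝ) : HasDerivAt (phiD l) (phiD (l + 1) x) x := by
  rw [phiD, phiD, iteratedDeriv_succ]
  exact ((contDiff_phiD l).differentiable (by simp) x).hasDerivAt

lemma phiD_eq_hermite (l : ℕ) (x : ℝ) :
    phiD l x = (√(2 * π))⁻¹ * (-1) ^ l * Polynomial.aeval x (Polynomial.hermite l) *
      exp (-(x ^ 2 / 2)) := by
  have : phi = fun x => (√(2 * π))⁻¹ * exp (-(x ^ 2 / 2)) := funext phi_eq_mul_exp
  rw [phiD, this, iteratedDeriv_const_mul_field, iteratedDeriv_eq_iterate,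
    Polynomial.deriv_gaussian_eq_hermite_mul_gaussian]
  ring

lemma tendsto_pow_mul_exp_neg_sq_div_two_cocompact (i : ℕ) :
    Tendsto (fun x : ℝ => x ^ i * exp (-(x ^ 2 / 2))) (cocompact ℝ) (𝓝 0) := by
  rw [tendsto_zero_iff_norm_tendsto_zero]
  convert tendsto_rpow_abs_mul_exp_neg_mul_sq_cocompact one_half_pos i using 2 with x
  rw [norm_mul, norm_pow, Real.norm_eq_abs, Real.rpow_natCast, Real.norm_of_nonneg (exp_pos _).le]
  ring_nf

lemma tendsto_aeval_mul_exp_neg_sq_div_two_cocompact (p : Polynomial ℤ) :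
    Tendsto (fun x : ℝ => Polynomial.aeval x p * exp (-(x ^ 2 / 2))) (cocompact ℝ) (𝓝 0) := by
  have h := tendsto_finsetSum (Finset.range (p.natDegree + 1)) fun i _ =>
    (tendsto_pow_mul_exp_neg_sq_div_two_cocompact i).const_mul (p.coeff i : ℝ)
  simp only [mul_zero, Finset.sum_const_zero] at h
  refine h.congr fun x => ?_
  simp [Polynomial.aeval_eq_sum_range, Finset.sum_mul, zsmul_eq_mul, mul_assoc]

lemma exists_abs_phiD_le (l : ℕ) : ∃ C, ∀ x, |phiD l x| ≤ C := by
  have htendsto : Tendsto (phiD l) (cocompact ℝ) (𝓝 0) := by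
    have h := (tendsto_aeval_mul_exp_neg_sq_div_two_cocompact (Polynomial.hermite l)).const_mul
      ((√(2 * π))⁻¹ * (-1) ^ l)
    rw [mul_zero] at h
    exact h.congr fun x => by rw [phiD_eq_hermite]; ring
  obtain ⟨C, hC⟩ := isBounded_iff_forall_norm_le.1
    ((continuous_phiD l).isBounded_range_iff_isBigO.2 (htendsto.isBigO_one ℝ))
  exact ⟨C, fun x => hC _ (mem_range_self x)⟩

lemma integrable_phi : Integrable phi := by
  have : phi = fun x => (√(2 * π))⁻¹ * exp (-(1 / 2) * x ^ 2) :=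
    funext fun x => by rw [phi_eq_mul_exp]; ring_nf
  rw [this]
  exact (integrable_exp_neg_mul_sq one_half_pos).const_mul _

lemma integrable_phi_div {a : ℝ} (ha : a ≠ 0) : Integrable fun x => phi (x / a) := by
  simpa only [div_eq_mul_inv] using integrable_phi.comp_mul_right' (inv_ne_zero ha)

lemma hasDerivAt_PhiCDF (x : ℝ) : HasDerivAt PhiCDF (phi x) x := by
  have hrw : PhiCDF = fun y => PhiCDF 0 + ∫ t in (0 : ℝ)..y, phi t := by
    funext y
    rw [PhiCDF, PhiCDF, ← intervalIntegral.integral_Iic_sub_Iic integrable_phi.integrableOn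
      integrable_phi.integrableOn]
    ring
  rw [hrw]
  exact (intervalIntegral.integral_hasDerivAt_right integrable_phi.intervalIntegrable
    continuous_phi.stronglyMeasurable.stronglyMeasurableAtFilter
    continuous_phi.continuousAt).const_add _

lemma deriv_PhiCDF : deriv PhiCDF = phi := funext fun x => (hasDerivAt_PhiCDF x).deriv

lemma iteratedDeriv_PhiCDF (m : ℕ) : iteratedDeriv m PhiCDF = phiDm1 m := by
  cases m with
  | zero => rfl
  | succ m => rw [iteratedDeriv_succ', deriv_PhiCDF]; rfl

lemma contDiff_PhiCDF : ContDiff ℝ ∞ PhiCDF :=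
  contDiff_infty_iff_deriv.2 ⟨fun x => (hasDerivAt_PhiCDF x).differentiableAt,
    deriv_PhiCDF ▸ contDiff_phi⟩

lemma integral_Ioi_phi_sub_div (μ : ℝ) {τ : ℝ} (hτ : 0 < τ) :
    ∫ θ in Ioi 0, phi ((θ - μ) / τ) = τ * PhiCDF (μ / τ) := by
  have hshift : ∫ θ in Ioi 0, phi ((θ - μ) / τ) = ∫ θ in Ioi (-μ), phi (θ / τ) := by
    have := (measurePreserving_sub_right volume μ).setIntegral_preimage_emb
      (measurableEmbedding_subRight μ) (fun θ => phi (θ / τ)) (Ioi (-μ))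
    rwa [preimage_sub_const_Ioi, neg_add_cancel] at this
  rw [hshift, show (fun θ => phi (θ / τ)) = fun θ => phi (τ⁻¹ * θ) by simp [div_eq_inv_mul],
    integral_comp_mul_left_Ioi _ _ (inv_pos.2 hτ), inv_inv, smul_eq_mul, PhiCDF,
    ← neg_neg (μ / τ), ← integral_comp_neg_Ioi]
  simp only [phi_neg, mul_neg, inv_mul_eq_div]

lemma phi_mul_phi_eq_of_sq_add_sq_eq {a b a' b' : ℝ} (h : a ^ 2 + b ^ 2 = a' ^ 2 + b' ^ 2) :
    phi a * phi b = phi a' * phi b' := by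
  have key : ∀ x y, phi x * phi y = (√(2 * π))⁻¹ ^ 2 * exp (-((x ^ 2 + y ^ 2) / 2)) := by
    intro x y
    rw [phi_eq_mul_exp, phi_eq_mul_exp, sq, mul_mul_mul_comm, ← exp_add]
    ring_nf
  rw [key, key, h]

lemma integral_Ioi_phi_div_mul_phi_sub_div (X : ℝ) {s σ : ℝ} (hs : 0 < s) (hσ : 0 < σ) :
    ∫ θ in Ioi 0, phi (θ / σ) * phi ((X - θ) / s) =
      s * σ / √(s ^ 2 + σ ^ 2) *
        (PhiCDF (σ / (s * √(s ^ 2 + σ ^ 2)) * X) * phi ((√(s ^ 2 + σ ^ 2))⁻¹ * X)) := by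
  set c := √(s ^ 2 + σ ^ 2)
  have hc : 0 < c := sqrt_pos.2 (by positivity)
  have hc2 : c ^ 2 = s ^ 2 + σ ^ 2 := sq_sqrt (by positivity)
  have hsplit : ∀ θ, phi (θ / σ) * phi ((X - θ) / s) =
      phi (c⁻¹ * X) * phi ((θ - X * σ ^ 2 / c ^ 2) / (s * σ / c)) := fun θ =>
    phi_mul_phi_eq_of_sq_add_sq_eq (by field_simp; rw [hc2]; ring)
  simp_rw [hsplit]
  rw [integral_const_mul, integral_Ioi_phi_sub_div _ (by positivity)]
  have harg : X * σ ^ 2 / c ^ 2 / (s * σ / c) = σ / (s * c) * X := by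
    field_simp
  rw [harg]
  ring

section Convolution

variable {μ : Measure ℝ} {g : ℝ → ℝ}

lemma integrable_mul_phiD (hg : Integrable g μ) (s X : ℝ) (l : ℕ) :
    Integrable (fun θ => g θ * phiD l ((X - θ) / s)) μ := by
  obtain ⟨C, hC⟩ := exists_abs_phiD_le l
  exact hg.mul_bdd (by fun_prop) (Eventually.of_forall fun θ => hC _)

lemma hasDerivAt_integral_mul_phiD (hg : Integrable g μ) (s X : ℝ) (l : ℕ) :
    HasDerivAt (fun X => ∫ θ, g θ * phiD l ((X - θ) / s) ∂μ)
      (s⁻¹ * ∫ θ, g θ * phiD (l + 1) ((X - θ) / s) ∂μ) X := by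
  obtain ⟨C, hC⟩ := exists_abs_phiD_le (l + 1)
  have hderiv : ∀ θ x, HasDerivAt (fun X => g θ * phiD l ((X - θ) / s))
      (s⁻¹ * (g θ * phiD (l + 1) ((x - θ) / s))) x := fun θ x => by
    have := (hasDerivAt_phiD l ((x - θ) / s)).comp x (((hasDerivAt_id x).sub_const θ).div_const s)
    exact (this.const_mul (g θ)).congr_deriv (by ring)
  rw [← integral_const_mul]
  refine (hasDerivAt_integral_of_dominated_loc_of_deriv_le
    (bound := fun θ => ‖s⁻¹‖ * (‖g θ‖ * C)) univ_mem
    (Eventually.of_forall fun x => (integrable_mul_phiD hg s x l).aestronglyMeasurable)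
    (integrable_mul_phiD hg s X l)
    ((integrable_mul_phiD hg s X (l + 1)).const_mul _).aestronglyMeasurable
    (Eventually.of_forall fun θ x _ => ?_) ((hg.norm.mul_const C).const_mul _)
    (Eventually.of_forall fun θ x _ => hderiv θ x)).2
  rw [norm_mul, norm_mul, Real.norm_eq_abs (phiD _ _)]
  gcongr
  exact hC _

lemma iteratedDeriv_integral_mul_phiD (hg : Integrable g μ) (s : ℝ) (k l : ℕ) :
    iteratedDeriv l (fun X => ∫ θ, g θ * phiD k ((X - θ) / s) ∂μ) =
      fun X => s⁻¹ ^ l * ∫ θ, g θ * phiD (k + l) ((X - θ) / s) ∂μ := by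
  induction l with
  | zero => simp
  | succ l ih =>
    ext X
    rw [iteratedDeriv_succ, ih, ((hasDerivAt_integral_mul_phiD hg s X (k + l)).const_mul _).deriv,
      ← add_assoc]
    ring

end Convolution

lemma iteratedDeriv_comp_mul_mul_comp_mul {𝕜 : Type*} [NontriviallyNormedField 𝕜] {n : ℕ}
    {f g : 𝕜 → 𝕜} (hf : ContDiff 𝕜 n f) (hg : ContDiff 𝕜 n g) (a b x : 𝕜) :
    iteratedDeriv n (fun x => f (a * x) * g (b * x)) x =
      ∑ i ∈ Finset.range (n + 1), n.choose i * (a ^ i * iteratedDeriv i f (a * x)) *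
        (b ^ (n - i) * iteratedDeriv (n - i) g (b * x)) := by
  have hfa : ContDiff 𝕜 n fun x => f (a * x) := hf.comp (contDiff_const.mul contDiff_id)
  have hgb : ContDiff 𝕜 n fun x => g (b * x) := hg.comp (contDiff_const.mul contDiff_id)
  rw [iteratedDeriv_fun_mul hfa.contDiffAt hgb.contDiffAt]
  refine Finset.sum_congr rfl fun i hi => ?_
  have hi : i ≤ n := Nat.lt_succ_iff.1 (Finset.mem_range.1 hi)
  rw [iteratedDeriv_comp_const_mul (hf.of_le (by exact_mod_cast hi)),
    iteratedDeriv_comp_const_mul (hg.of_le (by exact_mod_cast Nat.sub_le n i))]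

lemma integral_Ioi_phi_div_mul_phiD_sub_div (X : ℝ) {s σ : ℝ} (hs : 0 < s) (hσ : 0 < σ)
    (l : ℕ) :
    ∫ θ in Ioi 0, phi (θ / σ) * phiD l ((X - θ) / s) =
      s ^ l * (s * σ / √(s ^ 2 + σ ^ 2) * ∑ m ∈ Finset.range (l + 1), l.choose m *
        ((σ / (s * √(s ^ 2 + σ ^ 2))) ^ m * phiDm1 m (σ / (s * √(s ^ 2 + σ ^ 2)) * X)) *
        ((√(s ^ 2 + σ ^ 2))⁻¹ ^ (l - m) * phiD (l - m) ((√(s ^ 2 + σ ^ 2))⁻¹ * X))) := by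
  have hbase : (fun X => ∫ θ in Ioi 0, phi (θ / σ) * phiD 0 ((X - θ) / s)) =
      fun X => s * σ / √(s ^ 2 + σ ^ 2) * (PhiCDF (σ / (s * √(s ^ 2 + σ ^ 2)) * X) *
        phi ((√(s ^ 2 + σ ^ 2))⁻¹ * X)) :=
    funext fun X => by simpa only [phiD_zero] using integral_Ioi_phi_div_mul_phi_sub_div X hs hσ
  have h := congrFun (iteratedDeriv_integral_mul_phiD (μ := volume.restrict (Ioi 0))
    (integrable_phi_div hσ.ne').integrableOn s 0 l) X
  rw [hbase, iteratedDeriv_const_mul_field, iteratedDeriv_comp_mul_mul_comp_mul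
    (contDiff_infty.1 contDiff_PhiCDF l) (contDiff_infty.1 contDiff_phi l), zero_add] at h
  simp only [iteratedDeriv_PhiCDF, iteratedDeriv_phi] at h
  rw [h, ← mul_assoc, ← mul_pow, mul_inv_cancel₀ hs.ne', one_pow, one_mul]

/-- The half-line convolution identity giving the quantities `τ_{jkl}`:
`∫₀^∞ (1/σ)φ(θ/σ) (1/s)(1/√l!)φ^{(l)}((X−θ)/s) dθ
 = (s^l/(√l! (s²+σ²)^{(l+1)/2})) Σ_{m=0}^{l} C(l,m) (σ/s)^m
    φ^{(m−1)}((X/√(s²+σ²))(σ/s)) φ^{(l−m)}(X/√(s²+σ²))`. -/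
theorem half_line_convolution (X s σ : ℝ) (hs : 0 < s) (hσ : 0 < σ) (l : ℕ) :
    ∫ θ in Set.Ioi (0 : ℝ), (1 / σ) * phi (θ / σ) *
        ((1 / s) * (1 / Real.sqrt (Nat.factorial l)) * phiD l ((X - θ) / s)) =
      s ^ l / (Real.sqrt (Nat.factorial l) * (Real.sqrt (s ^ 2 + σ ^ 2)) ^ (l + 1)) *
        ∑ m ∈ Finset.range (l + 1), (l.choose m : ℝ) * (σ / s) ^ m *
          phiDm1 m ((X / Real.sqrt (s ^ 2 + σ ^ 2)) * (σ / s)) *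
          phiD (l - m) (X / Real.sqrt (s ^ 2 + σ ^ 2)) := by
  calc _ = 1 / σ * (1 / s) * (1 / √l.factorial) *
        ∫ θ in Ioi 0, phi (θ / σ) * phiD l ((X - θ) / s) := by
        rw [← integral_const_mul]
        congr 1 with θ
        ring
    _ = _ := by
        rw [integral_Ioi_phi_div_mul_phiD_sub_div X hs hσ l]
        set c := √(s ^ 2 + σ ^ 2)
        have hc : 0 < c := sqrt_pos.2 (by positivity)
        simp only [Finset.mul_sum]
        refine Finset.sum_congr rfl fun m hm => ?_
        have hm : m ≤ l := Nat.lt_succ_iff.1 (Finset.mem_range.1 hm)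
        rw [pow_succ, ← pow_mul_pow_sub c hm,
          show σ / (s * c) * X = X / c * (σ / s) by field_simp, inv_mul_eq_div]
        simp only [div_pow, mul_pow, inv_pow]
        field_simp
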